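/- For complex A, B, C, D and real β, define F(C,D) = (1/cosh(β/2))·exp(-(|A|²+|B|²+|C|²+|D|²)/2)·exp(tanh(β/2)·(A·conj(B) - conj(C)·D))·exp((A·conj(C) + conj(B)·D)/cosh(β/2)). Then (1/π²)·∫∫_{ℂ²} |F(C,D)|² dC dD = 1, where dC dD denotes Lebesgue measure on ℂ² (identifying ℂ with ℝ²). -/

import Mathlib

/-!
After taking the modulus, `|F|²` is `cosh⁻²(β/2)` times a Gaussian on `ℂ × ℂ` whose quadratic
form `|C|² + 2t⟪C, D⟫ + |D|²`, `t = tanh(β/2)`, couples the two factors. The measure-preserving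
shear `D ↦ D + tC` diagonalises it into `(1 - t²)|C|² + |D|²`, so the integral is a product of two
isotropic Gaussian integrals, equal to `π² / (1 - t²) · exp(…)`. Since `1 - t² = cosh⁻²(β/2)`,
the determinant cancels the prefactor and the completed square cancels the `A, B`-dependent
exponent.
-/

open MeasureTheory Real
open scoped InnerProductSpace

section Shear

variable {α G : Type*} [MeasurableSpace α] [MeasurableSpace G] [AddGroup G] [MeasurableAdd₂ G]
  {μ : Measure α} {ν : Measure G} [SFinite μ] [SFinite ν] [ν.IsAddRightInvariant]

theorem measurePreserving_prod_add_comp {φ : α → G} (hφ : Measurable φ) :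
    MeasurePreserving (fun p : α × G => (p.1, p.2 + φ p.1)) (μ.prod ν) (μ.prod ν) :=
  (MeasurePreserving.id μ).skew_product (by fun_prop)
    (Filter.Eventually.of_forall fun x => map_add_right_eq_self ν (φ x))

theorem integral_prod_mul_add_comp {𝕜 : Type*} [RCLike 𝕜] {f : α → 𝕜} {g : G → 𝕜}
    (hf : Integrable f μ) (hg : Integrable g ν) {φ : α → G} (hφ : Measurable φ) :
    ∫ p : α × G, f p.1 * g (p.2 + φ p.1) ∂μ.prod ν = (∫ x, f x ∂μ) * ∫ y, g y ∂ν := by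
  have hint : Integrable (fun p : α × G => f p.1 * g (p.2 + φ p.1)) (μ.prod ν) :=
    (measurePreserving_prod_add_comp hφ).integrable_comp_of_integrable (hf.mul_prod hg)
  rw [integral_prod _ hint, ← integral_mul_const]
  congr 1 with x
  simp only [integral_const_mul, integral_add_right_eq_self g (φ x) (μ := ν)]

end Shear

section Gaussian

variable {V : Type*} [NormedAddCommGroup V] [InnerProductSpace ℝ V] [FiniteDimensional ℝ V]
  [MeasurableSpace V] [BorelSpace V]

theorem integrable_exp_neg_mul_sq_norm_add_inner {b : ℝ} (hb : 0 < b) (w : V) :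
    Integrable fun v : V => rexp (-b * ‖v‖ ^ 2 + 2 * ⟪w, v⟫_ℝ) := by
  refine (GaussianFourier.integrable_cexp_neg_mul_sq_norm_add (V := V)
    (show 0 < (b : ℂ).re from hb) 2 w).norm.congr (Filter.Eventually.of_forall fun v => ?_)
  simp only [Complex.norm_exp]
  norm_cast

theorem integral_exp_neg_mul_sq_norm_add_inner {b : ℝ} (hb : 0 < b) (w : V) :
    ∫ v : V, rexp (-b * ‖v‖ ^ 2 + 2 * ⟪w, v⟫_ℝ)
      = (π / b) ^ (Module.finrank ℝ V / 2 : ℝ) * rexp (‖w‖ ^ 2 / b) := by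
  apply Complex.ofReal_injective
  rw [← integral_complex_ofReal]
  push_cast
  rw [GaussianFourier.integral_cexp_neg_mul_sq_norm_add (show 0 < (b : ℂ).re from hb),
    ← Complex.ofReal_div, Complex.ofReal_cpow (by positivity)]
  push_cast
  congr 2
  field_simp
  ring

theorem integral_exp_neg_quadratic_prod {t : ℝ} (ht : t ^ 2 < 1) (a b : V) :
    ∫ p : V × V, rexp (-(‖p.1‖ ^ 2 + 2 * t * ⟪p.1, p.2⟫_ℝ + ‖p.2‖ ^ 2)
        + 2 * (⟪a, p.1⟫_ℝ + ⟪b, p.2⟫_ℝ))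
      = (π ^ 2 / (1 - t ^ 2)) ^ (Module.finrank ℝ V / 2 : ℝ)
        * rexp ((‖a‖ ^ 2 - 2 * t * ⟪a, b⟫_ℝ + ‖b‖ ^ 2) / (1 - t ^ 2)) := by
  have hdet : 0 < 1 - t ^ 2 := by linarith
  have hshear : ∀ p : V × V,
      rexp (-(‖p.1‖ ^ 2 + 2 * t * ⟪p.1, p.2⟫_ℝ + ‖p.2‖ ^ 2) + 2 * (⟪a, p.1⟫_ℝ + ⟪b, p.2⟫_ℝ))
        = rexp (-(1 - t ^ 2) * ‖p.1‖ ^ 2 + 2 * ⟪a - t • b, p.1⟫_ℝ)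
          * rexp (-1 * ‖p.2 + t • p.1‖ ^ 2 + 2 * ⟪b, p.2 + t • p.1⟫_ℝ) := by
    intro p
    rw [← Real.exp_add]
    congr 1
    simp only [norm_add_sq_real, norm_smul, inner_add_right, inner_sub_left, real_inner_smul_left,
      real_inner_smul_right, real_inner_comm p.1 p.2, mul_pow, Real.norm_eq_abs, sq_abs]
    ring
  simp_rw [hshear]
  rw [show (volume : Measure (V × V)) = volume.prod volume from rfl,
    integral_prod_mul_add_comp (integrable_exp_neg_mul_sq_norm_add_inner hdet _)
      (integrable_exp_neg_mul_sq_norm_add_inner one_pos _) (measurable_const_smul t),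
    integral_exp_neg_mul_sq_norm_add_inner hdet, integral_exp_neg_mul_sq_norm_add_inner one_pos,
    mul_mul_mul_comm, ← mul_rpow (by positivity) (by positivity), ← Real.exp_add]
  congr 2
  · ring
  · rw [norm_sub_sq_real, norm_smul, real_inner_smul_right, Real.norm_eq_abs, mul_pow, sq_abs]
    field_simp
    ring

end Gaussian

theorem Real.one_sub_tanh_sq (x : ℝ) : 1 - tanh x ^ 2 = (cosh x ^ 2)⁻¹ := by
  have := cosh_pos x
  rw [tanh_eq_sinh_div_cosh, div_pow]
  field_simp
  linear_combination cosh_sq_sub_sinh_sq x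

theorem norm_sq_coherent_state_eq (A B C D : ℂ) (t c : ℝ) :
    ‖((1 / (c : ℂ)) * Complex.exp (-((‖A‖ ^ 2 + ‖B‖ ^ 2 + ‖C‖ ^ 2 + ‖D‖ ^ 2 : ℝ) : ℂ) / 2)
        * Complex.exp ((t : ℂ) * (A * (starRingEnd ℂ) B - (starRingEnd ℂ) C * D))
        * Complex.exp ((A * (starRingEnd ℂ) C + (starRingEnd ℂ) B * D) / (c : ℂ)))‖ ^ 2
      = (c ^ 2)⁻¹ * rexp (-(‖A‖ ^ 2 + ‖B‖ ^ 2) + 2 * t * ⟪A, B⟫_ℝ)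
        * rexp (-(‖C‖ ^ 2 + 2 * t * ⟪C, D⟫_ℝ + ‖D‖ ^ 2)
          + 2 * (⟪c⁻¹ • A, C⟫_ℝ + ⟪c⁻¹ • B, D⟫_ℝ)) := by
  rw [norm_mul, norm_mul, norm_mul, Complex.norm_exp, Complex.norm_exp, Complex.norm_exp,
    norm_div, norm_one, Complex.norm_real, Real.norm_eq_abs, mul_assoc, mul_assoc,
    ← Real.exp_add, ← Real.exp_add, mul_pow, ← Real.exp_nat_mul, mul_assoc, ← Real.exp_add,
    one_div, inv_pow, sq_abs]
  congr 2
  simp only [Complex.inner, Complex.real_smul, Complex.neg_re, Complex.div_ofNat_re,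
    Complex.div_ofReal_re, Complex.add_re, Complex.sub_re, Complex.mul_re, Complex.mul_im,
    Complex.ofReal_re, Complex.ofReal_im, Complex.conj_re, Complex.conj_im]
  ring

/-- Boost invariance of the coherent-state norm:
`(1/π²) ∫∫_{ℂ²} |F(C,D)|² dC dD = 1` where
`F(C,D) = (1/cosh(β/2)) exp(-(|A|²+|B|²+|C|²+|D|²)/2)
  · exp(tanh(β/2)(A B̄ - C̄ D)) · exp((A C̄ + B̄ D)/cosh(β/2))`. -/
theorem coherent_state_boost_norm (A B : ℂ) (β : ℝ) :
    (1 / (Real.pi : ℝ) ^ 2) *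
      ∫ p : ℂ × ℂ,
        ‖((1 / (Real.cosh (β / 2) : ℂ)) *
            Complex.exp (-((‖A‖ ^ 2 + ‖B‖ ^ 2
                + ‖p.1‖ ^ 2 + ‖p.2‖ ^ 2 : ℝ) : ℂ) / 2) *
            Complex.exp ((Real.tanh (β / 2) : ℂ) *
              (A * (starRingEnd ℂ) B - (starRingEnd ℂ) p.1 * p.2)) *
            Complex.exp ((A * (starRingEnd ℂ) p.1 + (starRingEnd ℂ) B * p.2)
              / (Real.cosh (β / 2) : ℂ)))‖ ^ 2 = 1 := by
  set t := tanh (β / 2)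
  set c := cosh (β / 2)
  have hc : 0 < c := cosh_pos _
  have hdet : 1 - t ^ 2 = (c ^ 2)⁻¹ := one_sub_tanh_sq _
  have ht : t ^ 2 < 1 := by linarith [inv_pos.2 (pow_pos hc 2)]
  have hexp : rexp (-(‖A‖ ^ 2 + ‖B‖ ^ 2) + 2 * t * ⟪A, B⟫_ℝ)
      * rexp ((‖c⁻¹ • A‖ ^ 2 - 2 * t * ⟪c⁻¹ • A, c⁻¹ • B⟫_ℝ + ‖c⁻¹ • B‖ ^ 2) / (c ^ 2)⁻¹) = 1 := by
    rw [← Real.exp_add, Real.exp_eq_one_iff, norm_smul, norm_smul, real_inner_smul_left,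
      real_inner_smul_right, Real.norm_of_nonneg (inv_nonneg.2 hc.le)]
    field_simp
    ring
  simp_rw [norm_sq_coherent_state_eq]
  rw [integral_const_mul, integral_exp_neg_quadratic_prod ht, Complex.finrank_real_complex, hdet,
    Nat.cast_ofNat, div_self two_ne_zero, rpow_one, mul_mul_mul_comm, hexp]
  field_simp
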